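/- arXiv:2307.04281 — 2 statements merged into one kernel-verified Lean document; each statement's English description precedes it below -/
import Mathlib

section
/- Let F be an elliptic curve over an algebraically closed field, a ∈ F a point of order at least 4, and φ an automorphism of F fixing the origin. If φ(a) = a, then φ is the identity. -/
/-!
A point `a` of order at least 4 satisfies `2 • a ≠ 0` and `3 • a ≠ 0`. If `φ` fixes `a`, so do all
its powers. When `φ` has order 2, 4 or 6, one of these powers is `-id`, giving `a = -a`; when `φ`
has order 3, `φ² + φ + id = 0` evaluated at `a` gives `3 • a = 0`. Hence `φ` has order 1.
-/

theorem nsmul_ne_zero_of_lt_of_le_addOrderOf {G : Type*} [AddMonoid G] {a : G} {m n : ℕ}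
    (ha : m ≤ addOrderOf a ∨ ¬IsOfFinAddOrder a) (hn₀ : n ≠ 0) (hnm : n < m) : n • a ≠ 0 := by
  rcases ha with hm | hinf
  · exact nsmul_ne_zero_of_lt_addOrderOf hn₀ (hnm.trans_le hm)
  · exact fun h ↦ hinf (isOfFinAddOrder_iff_nsmul_eq_zero.mpr ⟨n, Nat.pos_of_ne_zero hn₀, h⟩)

namespace AddAut

variable {A : Type*}

theorem nsmul_apply_eq_self [Add A] {φ : AddAut A} {a : A} (hfix : φ a = a) (n : ℕ) :
    (n • φ) a = a := by
  induction n with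
  | zero => rfl
  | succ n ih => rw [succ_nsmul, add_apply, hfix, ih]

theorem two_nsmul_eq_zero_of_apply_eq_self_of_nsmul_eq_neg [AddGroup A] {φ : AddAut A} {a : A}
    (hfix : φ a = a) {i : ℕ} (hneg : ∀ x, (i • φ) x = -x) : 2 • a = 0 := by
  have ha : a = -a := (nsmul_apply_eq_self hfix i).symm.trans (hneg a)
  calc 2 • a = a + -a := by rw [two_nsmul, ← ha]
    _ = 0 := add_neg_cancel a

theorem three_nsmul_eq_zero_of_apply_eq_self [AddMonoid A] {φ : AddAut A} {a : A}
    (hfix : φ a = a) (hcubic : φ (φ a) + φ a + a = 0) : 3 • a = 0 := by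
  rwa [hfix, hfix, ← two_nsmul, ← succ_nsmul] at hcubic

end AddAut

theorem aut_fixing_point_of_order_ge_four_is_id
    (F : Type) [AddCommGroup F]
    (Aut0 : AddSubgroup (AddAut F))
    (order_mem : ∀ φ ∈ Aut0, addOrderOf φ ∈ ({1, 2, 3, 4, 6} : Set ℕ))
    (pow_neg : ∀ φ ∈ Aut0, (addOrderOf φ = 2 ∨ addOrderOf φ = 4 ∨ addOrderOf φ = 6) →
      ∃ i : ℕ, ∀ x : F, (i • φ) x = -x)
    (cubic : ∀ φ ∈ Aut0, addOrderOf φ = 3 → ∀ x : F, φ (φ x) + φ x + x = 0)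
    (a : F) (ha : 4 ≤ addOrderOf a ∨ ¬ IsOfFinAddOrder a)
    (φ : AddAut F) (hφ : φ ∈ Aut0) (hfix : φ a = a) :
    φ = 0 := by
  have h2a : 2 • a ≠ 0 := nsmul_ne_zero_of_lt_of_le_addOrderOf ha two_ne_zero (by norm_num)
  have h3a : 3 • a ≠ 0 := nsmul_ne_zero_of_lt_of_le_addOrderOf ha three_ne_zero (by norm_num)
  have hmem := order_mem φ hφ
  simp only [Set.mem_insert_iff, Set.mem_singleton_iff] at hmem
  obtain h1 | h3 | h246 : addOrderOf φ = 1 ∨ addOrderOf φ = 3 ∨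
      (addOrderOf φ = 2 ∨ addOrderOf φ = 4 ∨ addOrderOf φ = 6) := by omega
  · exact AddMonoid.addOrderOf_eq_one_iff.mp h1
  · exact absurd (AddAut.three_nsmul_eq_zero_of_apply_eq_self hfix (cubic φ hφ h3 a)) h3a
  · obtain ⟨i, hi⟩ := pow_neg φ hφ h246
    exact absurd (AddAut.two_nsmul_eq_zero_of_apply_eq_self_of_nsmul_eq_neg hfix hi) h2a
end

section
/- Let F be an elliptic curve over an algebraically closed field of characteristic p > 0, and let a ∈ F be a point of order p^e ≥ 4 for some e > 0. Then F is ordinary, and the natural injection H^a_F → Aut_0(F) is an isomorphism of groups. -/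
/-!
A point `a` of order `p^e` with `e > 0` yields the nonzero `p`-torsion point `p^(e-1) • a`, so `F`
is ordinary, and `F[p^e]` is then the cyclic group generated by `a`. Every `φ ∈ Aut₀(F)` preserves
`F[p^e]`, hence sends `a` to a multiple `χ(φ) • a` with `χ(φ) ∈ ℤ/p^e` determined by `φ`;
`χ : Aut₀(F) → (ℤ/p^e)ˣ` is a homomorphism whose image is `H^a_F` by definition, and it is
injective because an automorphism fixing a point of order at least `4` is the identity.
-/

instance AddAut.group (A : Type) [Add A] : Group (AddAut A) where
  mul g h := AddEquiv.trans h g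
  one := AddEquiv.refl _
  inv := AddEquiv.symm
  mul_assoc _ _ _ := rfl
  one_mul _ := rfl
  mul_one _ := rfl
  inv_mul_cancel := AddEquiv.self_trans_symm

theorem exists_ne_zero_and_nsmul_eq_zero_of_addOrderOf_eq_pow {F : Type*} [AddCommGroup F]
    {p e : ℕ} (hp : p.Prime) (he : 0 < e) {a : F} (ha : addOrderOf a = p ^ e) :
    ∃ x : F, x ≠ 0 ∧ p • x = 0 := by
  have hx : addOrderOf ((addOrderOf a / p) • a) = p :=
    addOrderOf_nsmul_addOrderOf_sub (by simp [ha, hp.ne_zero]) (ha ▸ dvd_pow_self p he.ne')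
  refine ⟨_, fun h ↦ hp.one_lt.ne' ?_, hx ▸ addOrderOf_nsmul_eq_zero _⟩
  rw [← hx, h, addOrderOf_zero]

section OrderOf

variable {F : Type*} [AddCommGroup F] {a : F} {n : ℕ}

theorem val_natCast_nsmul_of_addOrderOf_eq (ha : addOrderOf a = n) (m : ℕ) :
    (m : ZMod n).val • a = m • a := by
  rw [ZMod.val_natCast, ← ha, mod_addOrderOf_nsmul]

theorem val_nsmul_injective_of_addOrderOf_eq [NeZero n] (ha : addOrderOf a = n) :
    Function.Injective fun k : ZMod n ↦ k.val • a := by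
  subst ha
  intro k l (hkl : k.val • a = l.val • a)
  rw [← ZMod.natCast_zmod_val k, ← ZMod.natCast_zmod_val l, ZMod.natCast_eq_natCast_iff]
  exact nsmul_eq_nsmul_iff_modEq.mp hkl

end OrderOf

namespace AddAut

variable {F : Type} [AddCommGroup F] {a : F} {n : ℕ}

theorem exists_monoidHom_units_apply_eq_val_nsmul [NeZero n] (ha : addOrderOf a = n)
    {S : Subgroup (AddAut F)} (hS : ∀ φ ∈ S, ∃ m : ℕ, φ a = m • a) :
    ∃ χ : S →* (ZMod n)ˣ, ∀ φ : S, (φ : AddAut F) a = (χ φ : ZMod n).val • a := by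
  have hk (φ : S) : ∃ k : ZMod n, (φ : AddAut F) a = k.val • a := by
    obtain ⟨m, hm⟩ := hS φ φ.2
    exact ⟨m, by rw [hm, val_natCast_nsmul_of_addOrderOf_eq ha]⟩
  choose k hk using hk
  let χ : S →* ZMod n :=
    { toFun := k
      map_one' := val_nsmul_injective_of_addOrderOf_eq ha <| by
        change (k 1).val • a = (1 : ZMod n).val • a
        rw [← Nat.cast_one (R := ZMod n), val_natCast_nsmul_of_addOrderOf_eq ha, ← hk, one_nsmul]
        rfl
      map_mul' := fun φ ψ ↦ val_nsmul_injective_of_addOrderOf_eq ha <| by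
        have hcast : k φ * k ψ = (((k φ).val * (k ψ).val : ℕ) : ZMod n) := by
          rw [Nat.cast_mul, ZMod.natCast_zmod_val, ZMod.natCast_zmod_val]
        change (k (φ * ψ)).val • a = (k φ * k ψ).val • a
        rw [hcast, val_natCast_nsmul_of_addOrderOf_eq ha, mul_nsmul, ← hk φ, ← map_nsmul, ← hk ψ,
          ← hk]
        rfl }
  exact ⟨χ.toHomUnits, hk⟩

theorem injective_of_apply_eq_val_nsmul (ha : addOrderOf a = n) {S : Subgroup (AddAut F)}
    (hfix : ∀ φ ∈ S, φ a = a → φ = 1) {χ : S →* (ZMod n)ˣ}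
    (hχ : ∀ φ : S, (φ : AddAut F) a = (χ φ : ZMod n).val • a) : Function.Injective χ := by
  refine (injective_iff_map_eq_one χ).mpr fun φ hφ ↦ Subtype.ext <| hfix φ φ.2 ?_
  rw [hχ, hφ, Units.val_one, ← Nat.cast_one, val_natCast_nsmul_of_addOrderOf_eq ha, one_nsmul]

theorem exists_subgroup_mulEquiv_of_apply_eq_val_nsmul [NeZero n] (ha : addOrderOf a = n)
    {S : Subgroup (AddAut F)} {χ : S →* (ZMod n)ˣ} (hinj : Function.Injective χ)
    (hχ : ∀ φ : S, (φ : AddAut F) a = (χ φ : ZMod n).val • a) :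
    ∃ H : Subgroup (ZMod n)ˣ,
      (∀ i : (ZMod n)ˣ, i ∈ H ↔ ∃ φ ∈ S, φ a = (i : ZMod n).val • a) ∧
      ∃ f : H ≃* S, ∀ i : H, (f i : AddAut F) a = ((i : (ZMod n)ˣ) : ZMod n).val • a := by
  refine ⟨χ.range, fun i ↦ ⟨?_, ?_⟩, (MonoidHom.ofInjective hinj).symm, fun i ↦ ?_⟩
  · rintro ⟨φ, rfl⟩
    exact ⟨φ, φ.2, hχ φ⟩
  · rintro ⟨φ, hφS, hφa⟩
    exact ⟨⟨φ, hφS⟩, Units.ext <|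
      val_nsmul_injective_of_addOrderOf_eq ha <| (hχ ⟨φ, hφS⟩).symm.trans hφa⟩
  · rw [hχ]
    exact congrArg (fun j : χ.range ↦ ((j : (ZMod n)ˣ) : ZMod n).val • a)
      ((MonoidHom.ofInjective hinj).apply_symm_apply i)

end AddAut

theorem H_a_F_iso_Aut0_for_p_power_order
    (p : ℕ) (hp : p.Prime)
    (F : Type) [AddCommGroup F]
    (Aut0 : Subgroup (AddAut F))
    (Ordinary : Prop)
    (ordinary_iff : Ordinary ↔ ∃ x : F, x ≠ 0 ∧ p • x = 0)
    (torsion_cyclic : Ordinary → ∀ (e : ℕ) (x y : F), addOrderOf y = p ^ e →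
      p ^ e • x = 0 → ∃ n : ℕ, x = n • y)
    (fix_unique : ∀ φ ∈ Aut0, ∀ x : F, 4 ≤ addOrderOf x → φ x = x → φ = 1)
    (e : ℕ) (he : 0 < e)
    (a : F) (ha : addOrderOf a = p ^ e) (ha4 : 4 ≤ p ^ e) :
    Ordinary ∧
    ∃ H : Subgroup (ZMod (p ^ e))ˣ,
      (∀ i : (ZMod (p ^ e))ˣ,
        i ∈ H ↔ ∃ φ ∈ Aut0, φ a = ((i : ZMod (p ^ e)).val) • a) ∧
      ∃ f : H ≃* Aut0,
        ∀ i : H, ((f i : AddAut F)) a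
          = (((i : (ZMod (p ^ e))ˣ) : ZMod (p ^ e)).val) • a := by
  have hord : Ordinary :=
    ordinary_iff.mpr (exists_ne_zero_and_nsmul_eq_zero_of_addOrderOf_eq_pow hp he ha)
  refine ⟨hord, ?_⟩
  have : NeZero (p ^ e) := ⟨pow_ne_zero e hp.ne_zero⟩
  have hmul (φ : AddAut F) (_ : φ ∈ Aut0) : ∃ m : ℕ, φ a = m • a :=
    torsion_cyclic hord e (φ a) a ha <| by
      rw [← map_nsmul, ← ha, addOrderOf_nsmul_eq_zero, map_zero]
  obtain ⟨χ, hχ⟩ := AddAut.exists_monoidHom_units_apply_eq_val_nsmul ha hmul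
  have hinj : Function.Injective χ :=
    AddAut.injective_of_apply_eq_val_nsmul ha (fun φ hφ ↦ fix_unique φ hφ a (ha ▸ ha4)) hχ
  exact AddAut.exists_subgroup_mulEquiv_of_apply_eq_val_nsmul ha hinj hχ
end
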